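/- An essentially positive Nevanlinna function that is not identically constant has only real, simple poles and real, simple zeros, and its zeros and poles interlace on the real axis. -/

import Mathlib

/-!
A Nevanlinna function maps each open half-plane into itself. If `f` has order `n ≥ 1` and leading
coefficient `c` at `z₀`, approaching `z₀` along a direction `e` shows that `Im (e ^ n * c)` has the
sign of the half-plane containing `z₀ + r * e`. Off the real axis this is impossible; on the real
axis it forces `n = 1` and `c > 0`. Poles are handled by passing to `-1/f`, which is again
Nevanlinna, and applying the same argument to `f - f x` at a real regular point `x` shows that
`f' x > 0`. Hence `f` is strictly increasing on each real interval between consecutive poles; since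
`|f| → ∞` at both ends it runs from `-∞` to `+∞` and vanishes exactly once. Exchanging `f` and
`-1/f` gives the other half of the interlacing.
-/

/-- Essentially positive Nevanlinna function. -/
def EssPosNevanlinna (f : ℂ → ℂ) : Prop :=
  MeromorphicOn f Set.univ ∧
  (∀ z : ℂ, z.im ≠ 0 → z.im * (f z).im > 0) ∧
  ∃ β : ℝ, ∀ x : ℝ, x < β → (f x).im = 0 ∧ 0 < (f x).re

/-- `f` has a pole at `z` (negative meromorphic order). -/
def IsPole (f : ℂ → ℂ) (hf : MeromorphicOn f Set.univ) (z : ℂ) : Prop :=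
  meromorphicOrderAt f z < 0

/-- `f` has a zero at `z` (positive, finite meromorphic order). -/
def IsZeroPt (f : ℂ → ℂ) (hf : MeromorphicOn f Set.univ) (z : ℂ) : Prop :=
  0 < meromorphicOrderAt f z ∧ meromorphicOrderAt f z ≠ ⊤

open Filter Topology Set Complex
open scoped Real

lemma tendsto_add_ofReal_mul_nhdsNE (z : ℂ) {e : ℂ} (he : e ≠ 0) :
    Tendsto (fun r : ℝ => z + r * e) (𝓝[>] 0) (𝓝[≠] z) := by
  refine tendsto_nhdsWithin_iff.2 ⟨?_, ?_⟩
  · have : Continuous fun r : ℝ => z + r * e := by fun_prop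
    simpa using (this.tendsto 0).mono_left nhdsWithin_le_nhds
  · filter_upwards [self_mem_nhdsWithin] with r (hr : 0 < r)
    simpa [he] using hr.ne'

lemma nonneg_mul_im_of_eventually_pos {h H : ℂ → ℂ} {z₀ e : ℂ} {n : ℕ} {a : ℝ}
    (hH : ContinuousAt H z₀) (heq : ∀ᶠ z in 𝓝[≠] z₀, h z = (z - z₀) ^ n * H z) (he : e ≠ 0)
    (hpos : ∀ᶠ r : ℝ in 𝓝[>] 0, 0 < a * (h (z₀ + r * e)).im) :
    0 ≤ a * (e ^ n * H z₀).im := by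
  have hray := tendsto_add_ofReal_mul_nhdsNE z₀ he
  have hlim : Tendsto (fun r : ℝ => a * (e ^ n * H (z₀ + r * e)).im) (𝓝[>] 0)
      (𝓝 (a * (e ^ n * H z₀).im)) :=
    ((continuous_im.tendsto _).comp
      ((hH.tendsto.comp (hray.mono_right nhdsWithin_le_nhds)).const_mul _)).const_mul a
  refine ge_of_tendsto hlim ?_
  filter_upwards [hray.eventually heq, hpos, self_mem_nhdsWithin] with r hr hr' (hr0 : 0 < r)
  -- `h (z₀ + r e) = r ^ n * (e ^ n * H (z₀ + r e))` with `r ^ n > 0`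
  rw [hr, add_sub_cancel_left, mul_pow, ← ofReal_pow, mul_assoc, im_ofReal_mul,
    mul_left_comm] at hr'
  exact (pos_of_mul_pos_right hr' (by positivity)).le

lemma eq_one_of_forall_im_mul_im_pow_mul_nonneg {n : ℕ} (hn : n ≠ 0) {c : ℂ} (hc : c ≠ 0)
    (h : ∀ e : ℂ, e.im ≠ 0 → 0 ≤ e.im * (e ^ n * c).im) : n = 1 ∧ c.im = 0 ∧ 0 < c.re := by
  have hF : Continuous fun s : ℝ => ((1 + s * I) ^ n * c).im := by fun_prop
  have hF0 : Tendsto (fun s : ℝ => ((1 + s * I) ^ n * c).im) (𝓝 0) (𝓝 c.im) := by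
    simpa using hF.tendsto 0
  have him : c.im = 0 := by
    refine le_antisymm (le_of_tendsto (hF0.mono_left (nhdsWithin_le_nhds (s := Iio 0))) ?_)
      (ge_of_tendsto (hF0.mono_left (nhdsWithin_le_nhds (s := Ioi 0))) ?_)
    · filter_upwards [self_mem_nhdsWithin] with s (hs : s < 0)
      have := h (1 + s * I) (by simpa using hs.ne)
      rw [show (1 + (s : ℂ) * I).im = s by simp] at this
      nlinarith
    · filter_upwards [self_mem_nhdsWithin] with s (hs : 0 < s)
      have := h (1 + s * I) (by simpa using hs.ne')
      rw [show (1 + (s : ℂ) * I).im = s by simp] at this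
      nlinarith
  have hre : c.re ≠ 0 := fun hre => hc (Complex.ext hre him)
  -- on the unit circle, `e = exp (θ i)` and `(e ^ n * c).im = c.re * sin (n θ)`
  have key : ∀ θ : ℝ, 0 < Real.sin θ → 0 ≤ c.re * Real.sin (n * θ) := by
    intro θ hθ
    have := h (exp (θ * I)) (by rw [exp_ofReal_mul_I_im]; exact hθ.ne')
    rw [← exp_nat_mul, ← mul_assoc, ← ofReal_natCast, ← ofReal_mul, mul_im,
      exp_ofReal_mul_I_re, exp_ofReal_mul_I_im, exp_ofReal_mul_I_im, him] at this
    nlinarith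
  have hn1 : n = 1 := by
    by_contra hn1
    have hn2 : (2 : ℝ) ≤ n := by norm_cast; omega
    have hπ := Real.pi_pos
    have h₁ := key (π / (2 * n)) (Real.sin_pos_of_pos_of_lt_pi (by positivity) (by
      rw [div_lt_iff₀ (by positivity)]; nlinarith))
    have h₂ := key (3 * π / (2 * n)) (Real.sin_pos_of_pos_of_lt_pi (by positivity) (by
      rw [div_lt_iff₀ (by positivity)]; nlinarith))
    rw [show (n : ℝ) * (π / (2 * n)) = π / 2 by field_simp, Real.sin_pi_div_two] at h₁
    rw [show (n : ℝ) * (3 * π / (2 * n)) = π / 2 + π by field_simp; ring, Real.sin_add_pi,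
      Real.sin_pi_div_two] at h₂
    exact hre (by linarith)
  subst hn1
  refine ⟨rfl, him, lt_of_le_of_ne ?_ hre.symm⟩
  simpa using key (π / 2) (by simp)

lemma exists_eq_zero_of_tendsto_abs_atTop {φ : ℝ → ℝ} {x y : ℝ} (hxy : x < y)
    (hmono : MonotoneOn φ (Ioo x y)) (hcont : ContinuousOn φ (Ioo x y))
    (hx : Tendsto (fun t => |φ t|) (𝓝[>] x) atTop) (hy : Tendsto (fun t => |φ t|) (𝓝[<] y) atTop) :
    ∃ t ∈ Ioo x y, φ t = 0 := by
  obtain ⟨m, hm⟩ := nonempty_Ioo.2 hxy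
  obtain ⟨a, ha, ha'⟩ := ((hx.eventually_gt_atTop |φ m|).and (Ioo_mem_nhdsGT hm.1)).exists
  obtain ⟨b, hb, hb'⟩ := ((hy.eventually_gt_atTop |φ m|).and (Ioo_mem_nhdsLT hm.2)).exists
  have ha'' : a ∈ Ioo x y := ⟨ha'.1, ha'.2.trans hm.2⟩
  have hb'' : b ∈ Ioo x y := ⟨hm.1.trans hb'.1, hb'.2⟩
  have hneg : φ a < 0 := by
    have := hmono ha'' hm ha'.2.le
    by_contra! h0
    rw [abs_of_nonneg h0] at ha
    linarith [le_abs_self (φ m)]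
  have hpos : 0 < φ b := by
    have := hmono hm hb'' hb'.1.le
    by_contra! h0
    rw [abs_of_nonpos h0] at hb
    linarith [neg_abs_le (φ m)]
  simpa using isPreconnected_Ioo.intermediate_value ha'' hb'' hcont ⟨hneg.le, hpos.le⟩

lemma meromorphicOrderAt_neg_inv {𝕜 : Type*} [NontriviallyNormedField 𝕜] (f : 𝕜 → 𝕜) (z : 𝕜) :
    meromorphicOrderAt (fun w => -(f w)⁻¹) z = -meromorphicOrderAt f z := by
  rw [← meromorphicOrderAt_fun_neg]
  exact meromorphicOrderAt_inv

section NormalForm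

variable {𝕜 : Type*} [NontriviallyNormedField 𝕜] {E : Type*} [NormedAddCommGroup E]
  [NormedSpace 𝕜 E] {f : 𝕜 → E} {U : Set 𝕜} {z : 𝕜}

lemma MeromorphicOn.analyticAt_toMeromorphicNFOn (hf : MeromorphicOn f U) (hz : z ∈ U)
    (h : 0 ≤ meromorphicOrderAt f z) : AnalyticAt 𝕜 (toMeromorphicNFOn f U) z :=
  (meromorphicNFOn_toMeromorphicNFOn f U hz).meromorphicOrderAt_nonneg_iff_analyticAt.1
    (by rwa [meromorphicOrderAt_toMeromorphicNFOn hf hz])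

lemma MeromorphicOn.toMeromorphicNFOn_eq_zero_iff (hf : MeromorphicOn f U) (hz : z ∈ U)
    (h : 0 ≤ meromorphicOrderAt f z) :
    toMeromorphicNFOn f U z = 0 ↔ 0 < meromorphicOrderAt f z := by
  rw [← not_ne_iff, ← (meromorphicNFOn_toMeromorphicNFOn f U hz).meromorphicOrderAt_eq_zero_iff,
    meromorphicOrderAt_toMeromorphicNFOn hf hz, h.lt_iff_ne']

lemma MeromorphicOn.tendsto_norm_toMeromorphicNFOn_atTop (hf : MeromorphicOn f U) (hz : z ∈ U)
    (h : meromorphicOrderAt f z < 0) :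
    Tendsto (fun w => ‖toMeromorphicNFOn f U w‖) (𝓝[≠] z) atTop :=
  tendsto_norm_atTop_iff_cobounded.2 (tendsto_cobounded_of_meromorphicOrderAt_neg
    (by rwa [meromorphicOrderAt_toMeromorphicNFOn hf hz]))

end NormalForm

structure IsNevanlinna (f : ℂ → ℂ) : Prop where
  meromorphicOn : MeromorphicOn f univ
  im_mul_im_pos : ∀ z : ℂ, z.im ≠ 0 → 0 < z.im * (f z).im

namespace IsNevanlinna

variable {f : ℂ → ℂ} (hf : IsNevanlinna f)
include hf

lemma neg_inv : IsNevanlinna fun z => -(f z)⁻¹ where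
  meromorphicOn z hz := (hf.meromorphicOn z hz).inv.neg
  im_mul_im_pos z hz := by
    have h := hf.im_mul_im_pos z hz
    have hfz : f z ≠ 0 := by rintro h0; simp [h0] at h
    rw [neg_im, inv_im, neg_div, neg_neg, ← mul_div_assoc]
    exact div_pos h (normSq_pos.2 hfz)

lemma sub_const {c : ℂ} (hc : c.im = 0) : IsNevanlinna fun z => f z - c where
  meromorphicOn := hf.meromorphicOn.sub (MeromorphicOn.const c)
  im_mul_im_pos z hz := by simpa [hc] using hf.im_mul_im_pos z hz

lemma meromorphicOrderAt_ne_top (z : ℂ) : meromorphicOrderAt f z ≠ ⊤ := by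
  refine hf.meromorphicOn.meromorphicOrderAt_ne_top_of_isPreconnected (x := I) isPreconnected_univ
    trivial trivial ?_
  intro h
  have him : ∀ᶠ w in 𝓝[≠] I, w.im ≠ 0 :=
    (continuous_im.continuousAt.eventually_ne (by simp)).filter_mono nhdsWithin_le_nhds
  obtain ⟨w, hw0, hw⟩ := ((meromorphicOrderAt_eq_top_iff.1 h).and him).exists
  simpa [hw0] using hf.im_mul_im_pos w hw

lemma exists_eventuallyEq_pow_mul {z : ℂ} (h : 0 ≤ meromorphicOrderAt f z) :
    ∃ n : ℕ, meromorphicOrderAt f z = n ∧ ∃ H : ℂ → ℂ, AnalyticAt ℂ H z ∧ H z ≠ 0 ∧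
      ∀ᶠ w in 𝓝[≠] z, f w = (w - z) ^ n * H w := by
  obtain ⟨k, hk⟩ := WithTop.ne_top_iff_exists.1 (hf.meromorphicOrderAt_ne_top z)
  lift k to ℕ using by simpa [← hk] using h
  obtain ⟨H, hH, hH0, heq⟩ := (meromorphicOrderAt_eq_int_iff (hf.meromorphicOn z trivial)).1 hk.symm
  exact ⟨k, hk.symm, H, hH, hH0, by simpa using heq⟩

lemma not_pos_meromorphicOrderAt_of_im_ne_zero {z : ℂ} (hz : z.im ≠ 0) :
    ¬ 0 < meromorphicOrderAt f z := by
  intro hpos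
  obtain ⟨n, hn, H, hH, hH0, heq⟩ := hf.exists_eventuallyEq_pow_mul hpos.le
  have hn0 : 0 < n := by simpa [hn] using hpos
  -- choose a direction `e` along which the leading term `e ^ n * H z` is `-z.im * I`
  obtain ⟨e, he⟩ := IsAlgClosed.exists_pow_nat_eq (-(z.im * I) / H z) hn0
  have he0 : e ≠ 0 := by
    rintro rfl
    simp [zero_pow hn0.ne', hz, hH0, eq_comm] at he
  have hnear : ∀ᶠ r : ℝ in 𝓝[>] 0, 0 < z.im * (z + r * e).im := by
    have : Tendsto (fun r : ℝ => z.im * (z + r * e).im) (𝓝 0) (𝓝 (z.im * z.im)) := by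
      have : Continuous fun r : ℝ => z.im * (z + r * e).im := by fun_prop
      simpa using this.tendsto 0
    exact (this.eventually_const_lt (mul_self_pos.2 hz)).filter_mono nhdsWithin_le_nhds
  have := nonneg_mul_im_of_eventually_pos (a := z.im) hH.continuousAt heq he0 (by
    filter_upwards [hnear] with r hr
    have hw := hf.im_mul_im_pos (z + r * e) (fun h0 => by simp [h0] at hr)
    refine pos_of_mul_pos_right (a := (z + r * e).im ^ 2) ?_ (sq_nonneg _)
    linarith [mul_pos hr hw])
  rw [he, div_mul_cancel₀ _ hH0] at this
  simp only [neg_im, mul_im, ofReal_re, I_im, ofReal_im, I_re] at this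
  nlinarith [mul_self_pos.2 hz]

lemma forall_im_mul_im_leading_nonneg (x : ℝ) {n : ℕ} {H : ℂ → ℂ} (hH : ContinuousAt H x)
    (heq : ∀ᶠ z in 𝓝[≠] (x : ℂ), f z = (z - x) ^ n * H z) :
    ∀ e : ℂ, e.im ≠ 0 → 0 ≤ e.im * (e ^ n * H x).im := by
  refine fun e he => nonneg_mul_im_of_eventually_pos hH heq (fun h0 => by simp [h0] at he) ?_
  filter_upwards [self_mem_nhdsWithin] with r (hr : 0 < r)
  have h := hf.im_mul_im_pos (x + r * e) (by simp [hr.ne', he])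
  exact pos_of_mul_pos_right (a := r) (by simpa [mul_assoc] using h) hr.le

lemma im_eq_zero_of_eventuallyEq (x : ℝ) {g : ℂ → ℂ} (hg : ContinuousAt g x)
    (hfg : f =ᶠ[𝓝[≠] (x : ℂ)] g) : (g x).im = 0 := by
  have key := hf.forall_im_mul_im_leading_nonneg x (n := 0) hg (hfg.mono fun z hz => by simp [hz])
  have h₁ := key I (by simp)
  have h₂ := key (-I) (by simp)
  simp only [I_im, neg_im, pow_zero, one_mul] at h₁ h₂
  linarith

lemma exists_eventuallyEq_mul_of_pos (x : ℝ) (h : 0 < meromorphicOrderAt f x) :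
    ∃ H : ℂ → ℂ, AnalyticAt ℂ H x ∧ (H x).im = 0 ∧ 0 < (H x).re ∧
      ∀ᶠ z in 𝓝[≠] (x : ℂ), f z = (z - x) * H z := by
  obtain ⟨n, hn, H, hH, hH0, heq⟩ := hf.exists_eventuallyEq_pow_mul h.le
  obtain ⟨rfl, him, hre⟩ := eq_one_of_forall_im_mul_im_pow_mul_nonneg
    (by rintro rfl; simp [hn] at h) hH0 (hf.forall_im_mul_im_leading_nonneg x hH.continuousAt heq)
  exact ⟨H, hH, him, hre, by simpa using heq⟩

lemma meromorphicOrderAt_eq_one_of_pos {z : ℂ} (h : 0 < meromorphicOrderAt f z) :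
    z.im = 0 ∧ meromorphicOrderAt f z = (1 : ℤ) := by
  have hz : z.im = 0 := by_contra fun hz => hf.not_pos_meromorphicOrderAt_of_im_ne_zero hz h
  refine ⟨hz, ?_⟩
  obtain ⟨x, rfl⟩ : ∃ x : ℝ, (x : ℂ) = z := ⟨z.re, Complex.ext (by simp) (by simp [hz])⟩
  obtain ⟨H, hH, -, hre, heq⟩ := hf.exists_eventuallyEq_mul_of_pos x h
  exact (meromorphicOrderAt_eq_int_iff (hf.meromorphicOn _ trivial)).2
    ⟨H, hH, fun h0 => by simp [h0] at hre, by simpa using heq⟩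

lemma meromorphicOrderAt_neg_inv_pos_iff (z : ℂ) :
    0 < meromorphicOrderAt (fun w => -(f w)⁻¹) z ↔ meromorphicOrderAt f z < 0 := by
  rw [meromorphicOrderAt_neg_inv, LinearOrderedAddCommGroupWithTop.neg_pos,
    or_iff_left (hf.meromorphicOrderAt_ne_top z)]

lemma meromorphicOrderAt_neg_inv_neg_iff (z : ℂ) :
    meromorphicOrderAt (fun w => -(f w)⁻¹) z < 0 ↔ 0 < meromorphicOrderAt f z := by
  simpa only [inv_neg, inv_inv, neg_neg] using
    (hf.neg_inv.meromorphicOrderAt_neg_inv_pos_iff z).symm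

lemma meromorphicOrderAt_eq_neg_one_of_neg {z : ℂ} (h : meromorphicOrderAt f z < 0) :
    z.im = 0 ∧ meromorphicOrderAt f z = (-1 : ℤ) := by
  have := hf.neg_inv.meromorphicOrderAt_eq_one_of_pos
    ((hf.meromorphicOrderAt_neg_inv_pos_iff z).2 h)
  rwa [meromorphicOrderAt_neg_inv, neg_eq_iff_eq_neg] at this

-- `f` itself may take arbitrary values at isolated points, so on the real axis we work with its
-- normal form.
lemma im_toMeromorphicNFOn_eq_zero (x : ℝ) (h : 0 ≤ meromorphicOrderAt f x) :
    (toMeromorphicNFOn f univ x).im = 0 :=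
  hf.im_eq_zero_of_eventuallyEq x
    (hf.meromorphicOn.analyticAt_toMeromorphicNFOn trivial h).continuousAt
    (hf.meromorphicOn.toMeromorphicNFOn_eq_self_on_nhdsNE trivial).symm

lemma hasDerivAt_re_toMeromorphicNFOn (x : ℝ) (h : 0 ≤ meromorphicOrderAt f x) :
    ∃ d > 0, HasDerivAt (fun t : ℝ => (toMeromorphicNFOn f univ t).re) d x := by
  set g := toMeromorphicNFOn f univ
  have hg := hf.meromorphicOn.analyticAt_toMeromorphicNFOn trivial h
  set c := g x
  -- `f - c` is again Nevanlinna and vanishes at `x`, so it has a simple zero there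
  have hgc : (fun z => g z - c) =ᶠ[𝓝[≠] (x : ℂ)] fun z => f z - c :=
    (hf.meromorphicOn.toMeromorphicNFOn_eq_self_on_nhdsNE trivial).sub EventuallyEq.rfl
  have hfc := hf.sub_const (hf.im_toMeromorphicNFOn_eq_zero x h)
  have hpos : 0 < meromorphicOrderAt (fun z => f z - c) x := by
    rw [← tendsto_zero_iff_meromorphicOrderAt_pos (hfc.meromorphicOn _ trivial)]
    refine Tendsto.congr' hgc ?_
    have : Tendsto (fun z => g z - c) (𝓝 (x : ℂ)) (𝓝 (c - c)) :=
      (hg.continuousAt.sub continuousAt_const).tendsto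
    rw [sub_self] at this
    exact this.mono_left nhdsWithin_le_nhds
  obtain ⟨H, hH, -, hre, heq⟩ := hfc.exists_eventuallyEq_mul_of_pos x hpos
  have hgH : g =ᶠ[𝓝 (x : ℂ)] fun z => c + (z - x) * H z :=
    eventuallyEq_nhds_of_eventuallyEq_nhdsNE
      ((hgc.trans heq).mono fun z hz => by linear_combination hz) (by simp [c])
  have hd : HasDerivAt g (H x) x := by
    have := (((hasDerivAt_id (x : ℂ)).sub_const (x : ℂ)).mul
      hH.differentiableAt.hasDerivAt).const_add c
    simpa using this.congr_of_eventuallyEq hgH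
  exact ⟨_, hre, hd.real_of_complex⟩

lemma continuousOn_re_toMeromorphicNFOn {s : Set ℝ} (h : ∀ t ∈ s, 0 ≤ meromorphicOrderAt f t) :
    ContinuousOn (fun t : ℝ => (toMeromorphicNFOn f univ t).re) s := fun t ht => by
  obtain ⟨d, -, hd⟩ := hf.hasDerivAt_re_toMeromorphicNFOn t (h t ht)
  exact hd.continuousAt.continuousWithinAt

lemma strictMonoOn_re_toMeromorphicNFOn {s : Set ℝ} (hs : Convex ℝ s)
    (h : ∀ t ∈ s, 0 ≤ meromorphicOrderAt f t) :
    StrictMonoOn (fun t : ℝ => (toMeromorphicNFOn f univ t).re) s := by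
  refine strictMonoOn_of_deriv_pos hs (hf.continuousOn_re_toMeromorphicNFOn h) fun t ht => ?_
  obtain ⟨d, hd0, hd⟩ := hf.hasDerivAt_re_toMeromorphicNFOn t (h t (interior_subset ht))
  rwa [hd.deriv]

lemma existsUnique_zero_between_poles {x y : ℝ} (hxy : x < y)
    (hx : meromorphicOrderAt f x < 0) (hy : meromorphicOrderAt f y < 0)
    (hno : ∀ t : ℝ, x < t → t < y → ¬ meromorphicOrderAt f t < 0) :
    ∃! t : ℝ, x < t ∧ t < y ∧ 0 < meromorphicOrderAt f t := by
  set g := toMeromorphicNFOn f univ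
  have hnn : ∀ t ∈ Ioo x y, 0 ≤ meromorphicOrderAt f t := fun t ht => not_lt.1 (hno t ht.1 ht.2)
  have hreal : ∀ t ∈ Ioo x y, g t = (g t).re :=
    fun t ht => Complex.ext rfl (hf.im_toMeromorphicNFOn_eq_zero t (hnn t ht))
  have hzero : ∀ t ∈ Ioo x y, 0 < meromorphicOrderAt f t ↔ (g t).re = 0 := fun t ht => by
    rw [← ofReal_eq_zero, ← hreal t ht]
    exact (hf.meromorphicOn.toMeromorphicNFOn_eq_zero_iff trivial (hnn t ht)).symm
  have hnorm : ∀ t ∈ Ioo x y, ‖g t‖ = |(g t).re| := fun t ht => by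
    rw [hreal t ht, norm_real, Real.norm_eq_abs, ofReal_re]
  have hblow (p : ℝ) (hp : meromorphicOrderAt f p < 0) :
      Tendsto (fun t : ℝ => ‖g t‖) (𝓝[≠] p) atTop :=
    (hf.meromorphicOn.tendsto_norm_toMeromorphicNFOn_atTop trivial hp).comp
      (continuous_ofReal.continuousWithinAt.tendsto_nhdsWithin fun _ ht => by simpa using ht)
  have hmono := hf.strictMonoOn_re_toMeromorphicNFOn (convex_Ioo x y) hnn
  obtain ⟨t, ht, ht0⟩ := exists_eq_zero_of_tendsto_abs_atTop hxy hmono.monotoneOn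
    (hf.continuousOn_re_toMeromorphicNFOn hnn)
    (((hblow x hx).mono_left (nhdsGT_le_nhdsNE x)).congr'
      (eventually_of_mem (Ioo_mem_nhdsGT hxy) hnorm))
    (((hblow y hy).mono_left (nhdsLT_le_nhdsNE y)).congr'
      (eventually_of_mem (Ioo_mem_nhdsLT hxy) hnorm))
  refine ⟨t, ⟨ht.1, ht.2, (hzero t ht).2 ht0⟩, fun s ⟨hs₁, hs₂, hs⟩ => ?_⟩
  exact hmono.injOn ⟨hs₁, hs₂⟩ ht (((hzero s ⟨hs₁, hs₂⟩).1 hs).trans ht0.symm)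

end IsNevanlinna

theorem essPosNevanlinna_zeros_poles_real_simple_interlace_general
    (f : ℂ → ℂ) (hmer : MeromorphicOn f Set.univ)
    (hf : EssPosNevanlinna f) :
    -- all poles are real and simple
    (∀ z : ℂ, IsPole f hmer z → z.im = 0 ∧ meromorphicOrderAt f z = (-1 : ℤ)) ∧
    -- all zeros are real and simple
    (∀ z : ℂ, IsZeroPt f hmer z → z.im = 0 ∧ meromorphicOrderAt f z = (1 : ℤ)) ∧
    -- between consecutive poles there is exactly one zero
    (∀ x y : ℝ, x < y → IsPole f hmer x → IsPole f hmer y →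
      (∀ t : ℝ, x < t → t < y → ¬ IsPole f hmer t) →
      ∃! t : ℝ, x < t ∧ t < y ∧ IsZeroPt f hmer t) ∧
    -- between consecutive zeros there is exactly one pole
    (∀ x y : ℝ, x < y → IsZeroPt f hmer x → IsZeroPt f hmer y →
      (∀ t : ℝ, x < t → t < y → ¬ IsZeroPt f hmer t) →
      ∃! t : ℝ, x < t ∧ t < y ∧ IsPole f hmer t) := by
  have hN : IsNevanlinna f := ⟨hmer, hf.2.1⟩
  have hzero (z : ℂ) : IsZeroPt f hmer z ↔ 0 < meromorphicOrderAt f z :=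
    and_iff_left (hN.meromorphicOrderAt_ne_top z)
  refine ⟨fun z hz => hN.meromorphicOrderAt_eq_neg_one_of_neg hz,
    fun z hz => hN.meromorphicOrderAt_eq_one_of_pos ((hzero z).1 hz),
    fun x y hxy hx hy hno => ?_, fun x y hxy hx hy hno => ?_⟩
  · simpa only [hzero] using hN.existsUnique_zero_between_poles hxy hx hy hno
  · simp only [hzero, IsPole, ← hN.meromorphicOrderAt_neg_inv_neg_iff,
      ← hN.meromorphicOrderAt_neg_inv_pos_iff] at hx hy hno ⊢
    exact hN.neg_inv.existsUnique_zero_between_poles hxy hx hy hno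

/-- An essentially positive Nevanlinna function that is not identically constant has only
real simple poles and real simple zeros, and its zeros and poles interlace on the real axis:
strictly between two consecutive poles there is exactly one zero, and strictly between two
consecutive zeros there is exactly one pole. -/
theorem essPosNevanlinna_zeros_poles_real_simple_interlace
    (f : ℂ → ℂ) (hmer : MeromorphicOn f Set.univ)
    (hf : EssPosNevanlinna f)
    (hnc : ¬ ∃ c : ℂ, ∀ z : ℂ, z.im ≠ 0 → f z = c) :
    -- all poles are real and simple
    (∀ z : ℂ, IsPole f hmer z → z.im = 0 ∧ meromorphicOrderAt f z = (-1 : ℤ)) ∧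
    -- all zeros are real and simple
    (∀ z : ℂ, IsZeroPt f hmer z → z.im = 0 ∧ meromorphicOrderAt f z = (1 : ℤ)) ∧
    -- between consecutive poles there is exactly one zero
    (∀ x y : ℝ, x < y → IsPole f hmer x → IsPole f hmer y →
      (∀ t : ℝ, x < t → t < y → ¬ IsPole f hmer t) →
      ∃! t : ℝ, x < t ∧ t < y ∧ IsZeroPt f hmer t) ∧
    -- between consecutive zeros there is exactly one pole
    (∀ x y : ℝ, x < y → IsZeroPt f hmer x → IsZeroPt f hmer y →
      (∀ t : ℝ, x < t → t < y → ¬ IsZeroPt f hmer t) →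
      ∃! t : ℝ, x < t ∧ t < y ∧ IsPole f hmer t) :=
  essPosNevanlinna_zeros_poles_real_simple_interlace_general f hmer hf
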